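/- As formal power series in q, Σ_{n≥0} q^{n(n+1)/2} / (−q; q)_n = Σ_{n≥1} n · q^{n(n−1)/2} / (−q; q)_n, i.e., Ramanujan's σ(q) equals the series with weight n and shifted triangular exponent. -/

import Mathlib

open PowerSeries Finset

/-!
With `A m = q^{m(m+1)/2} / (−q;q)_m`, the factor `1 + q^{m+1}` of `(−q;q)_{m+1}` gives
`q^{m(m+1)/2} / (−q;q)_{m+1} = A m − A (m+1)`, so the `n`-th weighted term is `n (A (n−1) − A n)`.
Summation by parts turns the weighted series into `Σ A m`, up to a boundary term `N · A N`
whose order `N(N+1)/2` tends to infinity.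
-/

/-- Ramanujan's `σ(q) = Σ_{n ≥ 0} q^{n(n+1)/2} / (−q;q)_n` as a formal power series over
`ℚ`: the term of index `m` has order at least `m`, so the `N`-th coefficient only
involves terms with `m ≤ N + 1`. -/
noncomputable def ramanujanSigma : PowerSeries ℚ :=
  PowerSeries.mk fun N =>
    coeff N (∑ m ∈ Finset.range (N + 2),
      (X : PowerSeries ℚ) ^ (m * (m + 1) / 2) *
        (∏ k ∈ Finset.range m, (1 + (X : PowerSeries ℚ) ^ (k + 1)))⁻¹)

/-- `Σ_{n ≥ 1} n · q^{n(n−1)/2} / (−q;q)_n`: the term of index `n` has order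
`n(n−1)/2 ≥ n − 1`, so the `N`-th coefficient only involves terms with `n ≤ N + 1`. -/
noncomputable def weightedSigma : PowerSeries ℚ :=
  PowerSeries.mk fun N =>
    coeff N (∑ n ∈ Finset.Icc 1 (N + 1),
      (n : PowerSeries ℚ) * (X : PowerSeries ℚ) ^ (n * (n - 1) / 2) *
        (∏ k ∈ Finset.range n, (1 + (X : PowerSeries ℚ) ^ (k + 1)))⁻¹)

namespace RamanujanSigma

variable {K : Type*} [Field K]

noncomputable def negQPochhammer (n : ℕ) : K⟦X⟧ :=
  ∏ k ∈ range n, (1 + X ^ (k + 1))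

noncomputable def sigmaTerm (m : ℕ) : K⟦X⟧ :=
  X ^ (m * (m + 1) / 2) * (negQPochhammer m)⁻¹

noncomputable def weightedTerm (n : ℕ) : K⟦X⟧ :=
  (n : K⟦X⟧) * X ^ (n * (n - 1) / 2) * (negQPochhammer n)⁻¹

lemma negQPochhammer_succ (n : ℕ) :
    (negQPochhammer (n + 1) : K⟦X⟧) = negQPochhammer n * (1 + X ^ (n + 1)) :=
  prod_range_succ _ _

lemma sigmaTerm_sub_sigmaTerm_succ (m : ℕ) :
    (sigmaTerm m - sigmaTerm (m + 1) : K⟦X⟧) =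
      X ^ (m * (m + 1) / 2) * (negQPochhammer (m + 1))⁻¹ := by
  have hexp : (m + 1) * (m + 1 + 1) / 2 = m * (m + 1) / 2 + (m + 1) := by
    simpa [mul_comm] using Nat.triangle_succ (m + 1)
  have hunit : (1 + X ^ (m + 1) : K⟦X⟧) * (1 + X ^ (m + 1))⁻¹ = 1 :=
    PowerSeries.mul_inv_cancel _ (by simp)
  rw [sigmaTerm, sigmaTerm, hexp, negQPochhammer_succ, PowerSeries.mul_inv_rev, pow_add]
  linear_combination -(X ^ (m * (m + 1) / 2) * (negQPochhammer m)⁻¹ : K⟦X⟧) * hunit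

lemma weightedTerm_succ (m : ℕ) :
    (weightedTerm (m + 1) : K⟦X⟧) = ((m : K⟦X⟧) + 1) * (sigmaTerm m - sigmaTerm (m + 1)) := by
  rw [sigmaTerm_sub_sigmaTerm_succ, weightedTerm, Nat.add_sub_cancel, mul_comm (m + 1) m]
  push_cast
  ring

/-- Summation by parts. -/
lemma sum_Icc_weightedTerm (N : ℕ) :
    ∑ n ∈ Icc 1 N, (weightedTerm n : K⟦X⟧) =
      ∑ m ∈ range N, sigmaTerm m - (N : K⟦X⟧) * sigmaTerm N := by
  induction N with
  | zero => simp
  | succ N ih =>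
    rw [sum_Icc_succ_top (by omega), ih, weightedTerm_succ, sum_range_succ]
    push_cast
    ring

lemma X_pow_dvd_sigmaTerm (m : ℕ) : (X : K⟦X⟧) ^ m ∣ sigmaTerm m := by
  refine (pow_dvd_pow X ?_).mul_right _
  rcases m.eq_zero_or_pos with rfl | hm
  · rfl
  · exact (Nat.le_div_iff_mul_le two_pos).2 (Nat.mul_le_mul_left m (by omega))

lemma coeff_sum_range_sigmaTerm (N : ℕ) :
    coeff N (∑ m ∈ range (N + 2), sigmaTerm m : K⟦X⟧) =
      coeff N (∑ n ∈ Icc 1 (N + 1), weightedTerm n) := by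
  have hboundary : coeff N (((N : K⟦X⟧) + 2) * sigmaTerm (N + 1)) = 0 :=
    X_pow_dvd_iff.1 ((X_pow_dvd_sigmaTerm (N + 1)).mul_left _) N (by omega)
  rw [sum_Icc_weightedTerm, sum_range_succ, ← sub_eq_zero, ← map_sub]
  convert hboundary using 2
  push_cast
  ring

end RamanujanSigma

open RamanujanSigma in
/-- `σ(q) = Σ_{n ≥ 1} n q^{n(n−1)/2} / (−q;q)_n`. -/
theorem stmt_5 : ramanujanSigma = weightedSigma := by
  ext N
  rw [ramanujanSigma, weightedSigma, coeff_mk, coeff_mk]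
  exact coeff_sum_range_sigmaTerm (K := ℚ) N
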